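/- Let A and X₁ be commuting bounded operators on a complex Hilbert space. Then ‖q(A, X₁)‖ ≤ sup_{w ∈ 𝔹̄₂} |q(w)| for every polynomial q ∈ ℂ[z₀, z₁] if and only if ‖p(A, X₁, 0, 0)‖ ≤ sup_{w ∈ ℍ̄} |p(w)| for every polynomial p ∈ ℂ[z₀, z₁, z₂, z₃], where 0 denotes the zero operator (i.e. (A, X₁) is a 𝔹₂-contraction if and only if (A, X₁, 0, 0) is an ℍ-contraction). -/

import Mathlib

noncomputable section

open Complex

/-- The closed tetrablock `𝔼̄ ⊆ ℂ³`. -/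
def closedTetrablock : Set (ℂ × ℂ × ℂ) :=
  {x | ‖x.1‖ ≤ 1 ∧
    0 ≤ 1 + ‖x.1‖ ^ 2 - ‖x.2.1‖ ^ 2 - ‖x.2.2‖ ^ 2
      - 2 * ‖x.1 - (starRingEnd ℂ) x.2.1 * x.2.2‖}

/-- The closed hexablock `ℍ̄ ⊆ ℂ⁴`. -/
def closedHexablock : Set (ℂ × ℂ × ℂ × ℂ) :=
  {w | (w.2.1, w.2.2.1, w.2.2.2) ∈ closedTetrablock ∧
    ∀ z₁ z₂ : ℂ, ‖z₁‖ < 1 → ‖z₂‖ < 1 →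
      ‖w.1‖ * Real.sqrt ((1 - ‖z₁‖ ^ 2) * (1 - ‖z₂‖ ^ 2)) ≤
        ‖1 - w.2.1 * z₁ - w.2.2.1 * z₂ + w.2.2.2 * z₁ * z₂‖}

/-- `sup_{w ∈ ℍ̄} |p(w)|` for a polynomial `p` in four variables. -/
def hexPolySup (p : MvPolynomial (Fin 4) ℂ) : ℝ :=
  sSup ((fun w : ℂ × ℂ × ℂ × ℂ =>
    ‖MvPolynomial.eval ![w.1, w.2.1, w.2.2.1, w.2.2.2] p‖) '' closedHexablock)

/-- `sup_{x ∈ 𝔼̄} |q(x)|` for a polynomial `q` in three variables. -/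
def tetraPolySup (q : MvPolynomial (Fin 3) ℂ) : ℝ :=
  sSup ((fun x : ℂ × ℂ × ℂ =>
    ‖MvPolynomial.eval ![x.1, x.2.1, x.2.2] q‖) '' closedTetrablock)

variable {H : Type*} [NormedAddCommGroup H] [InnerProductSpace ℂ H] [CompleteSpace H]

/-- Evaluation of a four-variable polynomial at a commuting quadruple of
operators. -/
def evalOp4 (T₀ T₁ T₂ T₃ : H →L[ℂ] H) (p : MvPolynomial (Fin 4) ℂ) : H →L[ℂ] H :=
  p.support.sum fun s =>
    MvPolynomial.coeff s p • (T₀ ^ s 0 * T₁ ^ s 1 * T₂ ^ s 2 * T₃ ^ s 3)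

/-- Evaluation of a three-variable polynomial at a commuting triple of
operators. -/
def evalOp3 (T₁ T₂ T₃ : H →L[ℂ] H) (q : MvPolynomial (Fin 3) ℂ) : H →L[ℂ] H :=
  q.support.sum fun s =>
    MvPolynomial.coeff s q • (T₁ ^ s 0 * T₂ ^ s 1 * T₃ ^ s 2)

/-- The closed Euclidean unit ball `𝔹̄₂ ⊆ ℂ²`. -/
def closedBiball : Set (ℂ × ℂ) :=
  {z | ‖z.1‖ ^ 2 + ‖z.2‖ ^ 2 ≤ 1}

/-- `sup_{w ∈ 𝔹̄₂} |q(w)|` for a polynomial `q` in two variables. -/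
def biballPolySup (q : MvPolynomial (Fin 2) ℂ) : ℝ :=
  sSup ((fun z : ℂ × ℂ =>
    ‖MvPolynomial.eval ![z.1, z.2] q‖) '' closedBiball)

/-- Evaluation of a two-variable polynomial at a commuting pair of
operators. -/
def evalOp2 (T₀ T₁ : H →L[ℂ] H) (q : MvPolynomial (Fin 2) ℂ) : H →L[ℂ] H :=
  q.support.sum fun s => MvPolynomial.coeff s q • (T₀ ^ s 0 * T₁ ^ s 1)

/-!
Substituting `z₂ = z₃ = 0` turns `p(A, X₁, 0, 0)` into `q(A, X₁)` with `q = p(·, ·, 0, 0)`, and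
every `q` arises this way, so both conditions test the same operators. What remains is geometry:
the slice `{(a, x₁) : (a, x₁, 0, 0) ∈ ℍ̄}` and the projection of `ℍ̄` to its first two coordinates
both equal `𝔹̄₂`. Taking `z₂ = 0`, the hexablock condition gives `|a| √(1 - |z|²) ≤ |1 - x₁ z|` for
`|z| < 1`, and for `|x₁| ≤ 1` this holds exactly when `|a|² + |x₁|² ≤ 1`. As `ℍ̄` is bounded, the
suprema over `𝔹̄₂` and `ℍ̄` compare as required.
-/

open MvPolynomial

def evalLastTwoAtZero : MvPolynomial (Fin 4) ℂ →ₐ[ℂ] MvPolynomial (Fin 2) ℂ :=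
  aeval ![X 0, X 1, 0, 0]

def firstTwo : Fin 2 → Fin 4 :=
  Fin.castLE (by norm_num)

theorem evalLastTwoAtZero_monomial (s : Fin 4 →₀ ℕ) (c : ℂ) :
    evalLastTwoAtZero (monomial s c) =
      monomial (Finsupp.single 0 (s 0) + Finsupp.single 1 (s 1)) (c * 0 ^ s 2 * 0 ^ s 3) := by
  rw [evalLastTwoAtZero, aeval_monomial, Finsupp.prod_fintype _ _ fun _ => pow_zero _,
    Fin.prod_univ_four]
  simp only [Matrix.cons_val, X_pow_eq_monomial, algebraMap_eq, ← C_0, ← map_pow, monomial_mul]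
  rw [mul_one, ← mul_one (c * _ * _), ← C_mul_monomial, map_mul, map_mul]
  ring

theorem evalLastTwoAtZero_rename_firstTwo (q : MvPolynomial (Fin 2) ℂ) :
    evalLastTwoAtZero (rename firstTwo q) = q := by
  rw [evalLastTwoAtZero, aeval_rename]
  have : (![X 0, X 1, 0, 0] ∘ firstTwo : Fin 2 → MvPolynomial (Fin 2) ℂ) = X := by
    funext i; fin_cases i <;> rfl
  rw [this, aeval_X_left, AlgHom.id_apply]

theorem eval_evalLastTwoAtZero (z₀ z₁ : ℂ) (p : MvPolynomial (Fin 4) ℂ) :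
    eval ![z₀, z₁] (evalLastTwoAtZero p) = eval ![z₀, z₁, 0, 0] p := by
  simp only [evalLastTwoAtZero, map_aeval, coe_eval₂Hom]
  rw [← eval₂_id]
  congr 1
  · ext; simp [algebraMap_eq]
  · funext i; fin_cases i <;> simp

theorem eval_rename_firstTwo (z₀ z₁ z₂ z₃ : ℂ) (q : MvPolynomial (Fin 2) ℂ) :
    eval ![z₀, z₁, z₂, z₃] (rename firstTwo q) = eval ![z₀, z₁] q := by
  rw [eval_rename]
  congr 2
  funext i; fin_cases i <;> rfl

section OperatorEvaluation

variable {E : Type*} [NormedAddCommGroup E] [InnerProductSpace ℂ E] (T₀ T₁ T₂ T₃ : E →L[ℂ] E)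

theorem evalOp2_eq_sum (q : MvPolynomial (Fin 2) ℂ) :
    evalOp2 T₀ T₁ q = (AddMonoidAlgebra.coeff q).sum fun s c => c • (T₀ ^ s 0 * T₁ ^ s 1) := by
  rw [sum_def]
  rfl

theorem evalOp4_eq_sum (p : MvPolynomial (Fin 4) ℂ) :
    evalOp4 T₀ T₁ T₂ T₃ p =
      (AddMonoidAlgebra.coeff p).sum fun s c =>
        c • (T₀ ^ s 0 * T₁ ^ s 1 * T₂ ^ s 2 * T₃ ^ s 3) := by
  rw [sum_def]
  rfl

theorem evalOp2_monomial (s : Fin 2 →₀ ℕ) (c : ℂ) :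
    evalOp2 T₀ T₁ (monomial s c) = c • (T₀ ^ s 0 * T₁ ^ s 1) := by
  rw [evalOp2_eq_sum, sum_monomial_eq (zero_smul ℂ _)]

theorem evalOp4_monomial (s : Fin 4 →₀ ℕ) (c : ℂ) :
    evalOp4 T₀ T₁ T₂ T₃ (monomial s c) = c • (T₀ ^ s 0 * T₁ ^ s 1 * T₂ ^ s 2 * T₃ ^ s 3) := by
  rw [evalOp4_eq_sum, sum_monomial_eq (zero_smul ℂ _)]

theorem evalOp2_add (p q : MvPolynomial (Fin 2) ℂ) :
    evalOp2 T₀ T₁ (p + q) = evalOp2 T₀ T₁ p + evalOp2 T₀ T₁ q := by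
  simp only [evalOp2_eq_sum, AddMonoidAlgebra.coeff_add]
  exact Finsupp.sum_add_index' (fun _ => zero_smul ℂ _) fun _ _ _ => add_smul _ _ _

theorem evalOp4_add (p q : MvPolynomial (Fin 4) ℂ) :
    evalOp4 T₀ T₁ T₂ T₃ (p + q) = evalOp4 T₀ T₁ T₂ T₃ p + evalOp4 T₀ T₁ T₂ T₃ q := by
  simp only [evalOp4_eq_sum, AddMonoidAlgebra.coeff_add]
  exact Finsupp.sum_add_index' (fun _ => zero_smul ℂ _) fun _ _ _ => add_smul _ _ _

theorem evalOp4_zero_zero (p : MvPolynomial (Fin 4) ℂ) :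
    evalOp4 T₀ T₁ 0 0 p = evalOp2 T₀ T₁ (evalLastTwoAtZero p) := by
  induction p using induction_on' with
  | add p q hp hq => rw [evalOp4_add, map_add, evalOp2_add, hp, hq]
  | monomial s c =>
    rw [evalOp4_monomial, evalLastTwoAtZero_monomial, evalOp2_monomial]
    by_cases h2 : s 2 = 0 <;> by_cases h3 : s 3 = 0 <;> simp [h2, h3, zero_pow]

end OperatorEvaluation

theorem norm_mul_sqrt_le_norm_one_sub_mul {a x : ℂ} (h : ‖a‖ ^ 2 + ‖x‖ ^ 2 ≤ 1) {z : ℂ}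
    (hz : ‖z‖ < 1) : ‖a‖ * √(1 - ‖z‖ ^ 2) ≤ ‖1 - x * z‖ := by
  have hxz : 1 - ‖x‖ * ‖z‖ ≤ ‖1 - x * z‖ := by
    simpa [norm_mul] using norm_sub_norm_le (1 : ℂ) (x * z)
  have hx : ‖x‖ ≤ 1 := by nlinarith [norm_nonneg a, norm_nonneg x]
  have hz2 : 0 ≤ 1 - ‖z‖ ^ 2 := by nlinarith [norm_nonneg z]
  refine le_trans ?_ hxz
  refine (pow_le_pow_iff_left₀ (by positivity) (by nlinarith [norm_nonneg z]) two_ne_zero).mp ?_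
  -- `(1 - |x||z|)² - (1 - |x|²)(1 - |z|²) = (|x| - |z|)²`
  rw [mul_pow, Real.sq_sqrt hz2]
  nlinarith [sq_nonneg (‖x‖ - ‖z‖),
    mul_le_mul_of_nonneg_right (by linarith : ‖a‖ ^ 2 ≤ 1 - ‖x‖ ^ 2) hz2]

theorem sq_norm_add_sq_norm_le_one {a x : ℂ} (hx : ‖x‖ ≤ 1)
    (h : ∀ z : ℂ, ‖z‖ < 1 → ‖a‖ * √(1 - ‖z‖ ^ 2) ≤ ‖1 - x * z‖) : ‖a‖ ^ 2 + ‖x‖ ^ 2 ≤ 1 := by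
  set s := ‖a‖ ^ 2 + ‖x‖ ^ 2
  by_contra! hs
  have hs0 : 0 < s := one_pos.trans hs
  have ha : 0 < ‖a‖ := by nlinarith [norm_nonneg a, norm_nonneg x]
  -- test point `z = x̄ / s`, at which `1 - x z = |a|² / s`
  have hz : ‖(s : ℂ)⁻¹ * (starRingEnd ℂ) x‖ = ‖x‖ / s := by
    rw [norm_mul, norm_inv, Complex.norm_real, Real.norm_of_nonneg hs0.le, Complex.norm_conj,
      inv_mul_eq_div]
  have hxz : 1 - x * ((s : ℂ)⁻¹ * (starRingEnd ℂ) x) = ((‖a‖ ^ 2 / s : ℝ) : ℂ) := by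
    rw [mul_left_comm, Complex.mul_conj, Complex.normSq_eq_norm_sq, ← Complex.ofReal_inv,
      ← Complex.ofReal_mul, ← Complex.ofReal_one, ← Complex.ofReal_sub]
    congr 1
    field_simp
    ring
  have key := h _ (by rw [hz, div_lt_one hs0]; linarith)
  rw [hz, hxz, Complex.norm_real, Real.norm_of_nonneg (by positivity), pow_two ‖a‖, mul_div_assoc,
    mul_le_mul_iff_right₀ ha, Real.sqrt_le_left (by positivity)] at key
  field_simp at key
  nlinarith

theorem mk_zero_zero_mem_closedHexablock {z : ℂ × ℂ} (hz : z ∈ closedBiball) :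
    (z.1, z.2, 0, 0) ∈ closedHexablock := by
  have hz' : ‖z.1‖ ^ 2 + ‖z.2‖ ^ 2 ≤ 1 := hz
  have h₂ : ‖z.2‖ ≤ 1 := by nlinarith [norm_nonneg z.1, norm_nonneg z.2]
  refine ⟨⟨h₂, ?_⟩, fun z₁ z₂ hz₁ hz₂ => ?_⟩
  · simp only [norm_zero, map_zero, mul_zero, sub_zero]
    nlinarith [sq_nonneg (1 - ‖z.2‖)]
  · simp only [zero_mul, sub_zero, add_zero]
    calc ‖z.1‖ * √((1 - ‖z₁‖ ^ 2) * (1 - ‖z₂‖ ^ 2)) ≤ ‖z.1‖ * √(1 - ‖z₁‖ ^ 2) := by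
          gcongr
          exact mul_le_of_le_one_right (by nlinarith [norm_nonneg z₁])
            (by nlinarith [norm_nonneg z₂])
      _ ≤ ‖1 - z.2 * z₁‖ := norm_mul_sqrt_le_norm_one_sub_mul hz' hz₁

theorem mem_closedBiball_of_mem_closedHexablock {w : ℂ × ℂ × ℂ × ℂ} (hw : w ∈ closedHexablock) :
    (w.1, w.2.1) ∈ closedBiball :=
  sq_norm_add_sq_norm_le_one hw.1.1 fun z hz => by simpa using hw.2 z 0 hz (by simp)

theorem image_closedHexablock_eq_closedBiball :
    (fun w : ℂ × ℂ × ℂ × ℂ => (w.1, w.2.1)) '' closedHexablock = closedBiball := by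
  refine subset_antisymm (Set.image_subset_iff.2 fun w => mem_closedBiball_of_mem_closedHexablock)
    fun z hz => ⟨_, mk_zero_zero_mem_closedHexablock hz, rfl⟩

theorem closedTetrablock_subset_closedBall : closedTetrablock ⊆ Metric.closedBall 0 2 := by
  rintro x ⟨h₁, h⟩
  have h₁' : ‖x.1‖ ≤ 1 := h₁
  have hsq : ‖x.2.1‖ ^ 2 + ‖x.2.2‖ ^ 2 ≤ 2 := by
    nlinarith [norm_nonneg (x.1 - (starRingEnd ℂ) x.2.1 * x.2.2), norm_nonneg x.1]
  rw [mem_closedBall_zero_iff, Prod.norm_def, Prod.norm_def]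
  refine max_le (by linarith) (max_le ?_ ?_) <;>
    nlinarith [norm_nonneg x.2.1, norm_nonneg x.2.2]

theorem isBounded_closedHexablock : Bornology.IsBounded closedHexablock := by
  refine (Metric.isBounded_closedBall (x := 0) (r := 2)).subset fun w hw => ?_
  have ha : ‖w.1‖ ≤ 1 := by simpa using hw.2 0 0 (by simp) (by simp)
  have hx := closedTetrablock_subset_closedBall hw.1
  rw [mem_closedBall_zero_iff] at hx ⊢
  exact max_le (by linarith) hx

theorem hexPolySup_rename_firstTwo (q : MvPolynomial (Fin 2) ℂ) :
    hexPolySup (rename firstTwo q) = biballPolySup q := by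
  simp only [hexPolySup, biballPolySup, eval_rename_firstTwo]
  rw [← image_closedHexablock_eq_closedBiball, Set.image_image]

theorem biballPolySup_evalLastTwoAtZero_le (p : MvPolynomial (Fin 4) ℂ) :
    biballPolySup (evalLastTwoAtZero p) ≤ hexPolySup p := by
  have hcont : Continuous fun w : ℂ × ℂ × ℂ × ℂ => ‖eval ![w.1, w.2.1, w.2.2.1, w.2.2.2] p‖ :=
    (continuous_eval p |>.comp <| by fun_prop).norm
  have hbdd := (isBounded_closedHexablock.isCompact_closure.bddAbove_image
    hcont.continuousOn).mono (Set.image_mono subset_closure)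
  simp only [biballPolySup, hexPolySup, eval_evalLastTwoAtZero]
  refine csSup_le_csSup hbdd ⟨_, (0, 0), by simp [closedBiball], rfl⟩ ?_
  rintro _ ⟨z, hz, rfl⟩
  exact ⟨_, mk_zero_zero_mem_closedHexablock hz, rfl⟩

theorem biball_contraction_iff_H_contraction_general
    (A X₁ : H →L[ℂ] H) :
    (∀ q : MvPolynomial (Fin 2) ℂ, ‖evalOp2 A X₁ q‖ ≤ biballPolySup q) ↔
      ∀ p : MvPolynomial (Fin 4) ℂ, ‖evalOp4 A X₁ 0 0 p‖ ≤ hexPolySup p := by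
  refine ⟨fun h p => ?_, fun h q => ?_⟩
  · rw [evalOp4_zero_zero]
    exact (h _).trans (biballPolySup_evalLastTwoAtZero_le p)
  · calc ‖evalOp2 A X₁ q‖ = ‖evalOp4 A X₁ 0 0 (rename firstTwo q)‖ := by
          rw [evalOp4_zero_zero, evalLastTwoAtZero_rename_firstTwo]
      _ ≤ hexPolySup (rename firstTwo q) := h _
      _ = biballPolySup q := hexPolySup_rename_firstTwo q

/-- `(A, X₁)` is a `𝔹₂`-contraction if and only if `(A, X₁, 0, 0)` is an
`ℍ`-contraction. -/
theorem biball_contraction_iff_H_contraction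
    (A X₁ : H →L[ℂ] H) (hAX : Commute A X₁) :
    (∀ q : MvPolynomial (Fin 2) ℂ, ‖evalOp2 A X₁ q‖ ≤ biballPolySup q) ↔
      ∀ p : MvPolynomial (Fin 4) ℂ, ‖evalOp4 A X₁ 0 0 p‖ ≤ hexPolySup p :=
  biball_contraction_iff_H_contraction_general A X₁
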